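/- Let v be a vertex of a graph G whose closed neighborhood N[v] is contained in the closed neighborhood N[u] of a neighbor u of v (u is 'dominated' by v). Then there exists a maximum independent set of G not containing u. -/

import Mathlib

/-
If `u` lies in a maximum independent set `I`, then `v ∉ I` (as `u ~ v`) and no vertex of
`I - u` is adjacent to `v`, since such a vertex would lie in `N[v] ⊆ N[u]`. Hence
`I - u + v` is again a maximum independent set, and it avoids `u`.
-/

variable {V : Type*} [Fintype V] [DecidableEq V]

def IsIndep (G : SimpleGraph V) (I : Finset V) : Prop :=
  ∀ u ∈ I, ∀ v ∈ I, ¬ G.Adj u v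

def IsMaxIndep (G : SimpleGraph V) (I : Finset V) : Prop :=
  IsIndep G I ∧ ∀ J : Finset V, IsIndep G J → J.card ≤ I.card

section

variable {α : Type*} {G : SimpleGraph α}

theorem SimpleGraph.exists_isMaxIndep [Fintype α] (G : SimpleGraph α) :
    ∃ I : Finset α, IsMaxIndep G I := by
  classical
  have hne : (Finset.univ.filter (IsIndep G)).Nonempty := ⟨∅, by simp [IsIndep]⟩
  obtain ⟨I, hI, hmax⟩ := Finset.exists_max_image _ Finset.card hne
  exact ⟨I, (Finset.mem_filter.mp hI).2, fun J hJ => hmax J (by simpa using hJ)⟩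

theorem IsMaxIndep.of_card_le {I J : Finset α} (hI : IsMaxIndep G I) (hJ : IsIndep G J)
    (hcard : I.card ≤ J.card) : IsMaxIndep G J :=
  ⟨hJ, fun K hK => (hI.2 K hK).trans hcard⟩

theorem SimpleGraph.adj_of_closedNeighborFinset_subset [DecidableEq α] [G.LocallyFinite]
    {u v w : α}
    (hdom : insert v (G.neighborFinset v) ⊆ insert u (G.neighborFinset u))
    (hvw : G.Adj v w) (hwu : w ≠ u) : G.Adj u w := by
  have hw : w ∈ insert u (G.neighborFinset u) := hdom (by simp [hvw])
  simpa [hwu] using hw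

theorem IsIndep.insert_erase_of_closedNeighborFinset_subset [DecidableEq α] [G.LocallyFinite]
    {I : Finset α} {u v : α} (hI : IsIndep G I) (hu : u ∈ I)
    (hdom : insert v (G.neighborFinset v) ⊆ insert u (G.neighborFinset u)) :
    IsIndep G (insert v (I.erase u)) := by
  have hv : ∀ w ∈ I.erase u, ¬ G.Adj v w := fun w hw hvw =>
    hI u hu w (Finset.mem_of_mem_erase hw)
      (G.adj_of_closedNeighborFinset_subset hdom hvw (Finset.ne_of_mem_erase hw))
  intro a ha b hb hab
  rcases Finset.mem_insert.mp ha with rfl | ha <;> rcases Finset.mem_insert.mp hb with hb | hb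
  · exact G.loopless.irrefl _ (hb ▸ hab)
  · exact hv _ hb hab
  · exact hv _ ha (hb ▸ hab.symm)
  · exact hI _ (Finset.mem_of_mem_erase ha) _ (Finset.mem_of_mem_erase hb) hab

theorem IsIndep.card_insert_erase_of_adj [DecidableEq α] {I : Finset α} {u v : α}
    (hI : IsIndep G I) (hu : u ∈ I) (huv : G.Adj u v) : (insert v (I.erase u)).card = I.card := by
  have hv : v ∉ I.erase u := fun hv => hI u hu v (Finset.mem_of_mem_erase hv) huv
  rw [Finset.card_insert_of_notMem hv, Finset.card_erase_add_one hu]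

end

theorem domination_reduction (G : SimpleGraph V) [DecidableRel G.Adj] (u v : V)
    (huv : G.Adj u v)
    (hdom : insert v (G.neighborFinset v) ⊆ insert u (G.neighborFinset u)) :
    ∃ I : Finset V, IsMaxIndep G I ∧ u ∉ I := by
  obtain ⟨I, hI⟩ := G.exists_isMaxIndep
  by_cases hu : u ∈ I
  · refine ⟨insert v (I.erase u), hI.of_card_le ?_ ?_, ?_⟩
    · exact hI.1.insert_erase_of_closedNeighborFinset_subset hu hdom
    · exact (hI.1.card_insert_erase_of_adj hu huv).ge
    · simp [huv.ne]
  · exact ⟨I, hI, hu⟩
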